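/- Let B₀ = γ⁻¹ I with γ > 0, and for j = 0,…,k-1 let B_{j+1} = B_j - (1/(s_jᵀB_j s_j)) B_j s_j s_jᵀ B_j + (1/(y_jᵀ s_j)) y_j y_jᵀ, where each pair satisfies y_jᵀ s_j > 0 and s_j ≠ 0. Then the largest eigenvalue of B_k satisfies λ_max(B_k) ≤ γ⁻¹ + Σ_{j=0}^{k-1} ‖y_j‖² / (y_jᵀ s_j). -/

import Mathlib

/-! In the Loewner order, a BFGS update subtracts `(B s)(B s)ᵀ / sᵀ B s`, which is positive
semidefinite and, by Cauchy–Schwarz for the form `uᵀ B v`, still dominated by `B`; it then adds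
`y yᵀ / yᵀ s ≤ (‖y‖² / yᵀ s) I`. So every `B_j` stays positive semidefinite and
`B_k ≤ (γ⁻¹ + Σ ‖y_j‖² / yᵀ_j s_j) I`, which bounds every eigenvalue of `B_k`. -/

open Matrix
open scoped MatrixOrder

namespace Matrix

variable {ι : Type*} [Fintype ι]

noncomputable def bfgsUpdate (B : Matrix ι ι ℝ) (s y : ι → ℝ) : Matrix ι ι ℝ :=
  B - (1 / (s ⬝ᵥ B *ᵥ s)) • (B * vecMulVec s s * B) + (1 / (y ⬝ᵥ s)) • vecMulVec y y

theorem dotProduct_vecMulVec_mulVec (u a b v : ι → ℝ) :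
    u ⬝ᵥ vecMulVec a b *ᵥ v = (u ⬝ᵥ a) * (b ⬝ᵥ v) := by
  rw [vecMulVec_mulVec, dotProduct_smul]
  simp

theorem IsHermitian.dotProduct_mulVec_comm {B : Matrix ι ι ℝ} (hB : B.IsHermitian)
    (u v : ι → ℝ) : u ⬝ᵥ B *ᵥ v = v ⬝ᵥ B *ᵥ u := by
  have hT : Bᵀ = B := by rw [← conjTranspose_eq_transpose_of_trivial, hB.eq]
  rw [dotProduct_mulVec, ← mulVec_transpose, hT, dotProduct_comm]

theorem PosSemidef.sq_dotProduct_mulVec_le {B : Matrix ι ι ℝ} (hB : B.PosSemidef)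
    (u v : ι → ℝ) : (u ⬝ᵥ B *ᵥ v) ^ 2 ≤ (u ⬝ᵥ B *ᵥ u) * (v ⬝ᵥ B *ᵥ v) := by
  have hquad : ∀ t : ℝ, 0 ≤ (v ⬝ᵥ B *ᵥ v) * (t * t) + 2 * (u ⬝ᵥ B *ᵥ v) * t + u ⬝ᵥ B *ᵥ u := by
    intro t
    have h := hB.dotProduct_mulVec_nonneg (u + t • v)
    simp only [star_trivial, mulVec_add, mulVec_smul, dotProduct_add, add_dotProduct,
      dotProduct_smul, smul_dotProduct, smul_eq_mul, hB.isHermitian.dotProduct_mulVec_comm v u] at h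
    linarith
  have := discrim_le_zero hquad
  rw [discrim] at this
  linarith

theorem IsHermitian.mul_vecMulVec_self_mul {B : Matrix ι ι ℝ} (hB : B.IsHermitian) (s : ι → ℝ) :
    B * vecMulVec s s * B = vecMulVec (B *ᵥ s) (B *ᵥ s) := by
  rw [mul_vecMulVec, vecMulVec_mul, ← mulVec_transpose, ← conjTranspose_eq_transpose_of_trivial,
    hB.eq]

theorem posSemidef_vecMulVec_self (a : ι → ℝ) : (vecMulVec a a).PosSemidef := by
  simpa using posSemidef_vecMulVec_self_star a

theorem vecMulVec_self_le_smul_one [DecidableEq ι] (a : ι → ℝ) :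
    vecMulVec a a ≤ (a ⬝ᵥ a) • 1 := by
  refine le_iff.2 <| .of_dotProduct_mulVec_nonneg
    ((isHermitian_one.smul (.all _)).sub (posSemidef_vecMulVec_self a).isHermitian) fun x => ?_
  have := PosSemidef.one.sq_dotProduct_mulVec_le x a
  simp only [star_trivial, sub_mulVec, smul_mulVec, one_mulVec, dotProduct_sub, dotProduct_smul,
    smul_eq_mul, dotProduct_vecMulVec_mulVec] at this ⊢
  rw [dotProduct_comm a x]
  nlinarith

theorem PosSemidef.sub_smul_vecMulVec_mulVec {B : Matrix ι ι ℝ} (hB : B.PosSemidef) (s : ι → ℝ) :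
    (B - (1 / (s ⬝ᵥ B *ᵥ s)) • vecMulVec (B *ᵥ s) (B *ᵥ s)).PosSemidef := by
  refine .of_dotProduct_mulVec_nonneg
    (hB.isHermitian.sub ((posSemidef_vecMulVec_self _).isHermitian.smul (.all _))) fun x => ?_
  have hcs := hB.sq_dotProduct_mulVec_le x s
  have hc : 0 ≤ s ⬝ᵥ B *ᵥ s := by simpa using hB.dotProduct_mulVec_nonneg s
  simp only [star_trivial, sub_mulVec, smul_mulVec, dotProduct_sub, dotProduct_smul,
    smul_eq_mul, dotProduct_vecMulVec_mulVec, dotProduct_comm (B *ᵥ s) x]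
  rcases hc.eq_or_lt with hc | hc
  · -- `1 / 0 = 0`: nothing is subtracted
    simpa [← hc] using hB.dotProduct_mulVec_nonneg x
  · rw [one_div_mul_eq_div, sub_nonneg, div_le_iff₀ hc]
    nlinarith

theorem bfgsUpdate_eq_of_isHermitian {B : Matrix ι ι ℝ} (hB : B.IsHermitian) (s y : ι → ℝ) :
    bfgsUpdate B s y = (B - (1 / (s ⬝ᵥ B *ᵥ s)) • vecMulVec (B *ᵥ s) (B *ᵥ s))
      + (1 / (y ⬝ᵥ s)) • vecMulVec y y := by
  rw [bfgsUpdate, hB.mul_vecMulVec_self_mul]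

theorem posSemidef_bfgsUpdate {B : Matrix ι ι ℝ} (hB : B.PosSemidef) {s y : ι → ℝ}
    (hys : 0 ≤ y ⬝ᵥ s) : (bfgsUpdate B s y).PosSemidef := by
  rw [bfgsUpdate_eq_of_isHermitian hB.isHermitian]
  exact (hB.sub_smul_vecMulVec_mulVec s).add
    ((posSemidef_vecMulVec_self y).smul (one_div_nonneg.2 hys))

theorem bfgsUpdate_le [DecidableEq ι] {B : Matrix ι ι ℝ} (hB : B.PosSemidef)
    {s y : ι → ℝ} (hys : 0 ≤ y ⬝ᵥ s) :
    bfgsUpdate B s y ≤ B + ((y ⬝ᵥ y) / (y ⬝ᵥ s)) • 1 := by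
  have hc : 0 ≤ 1 / (s ⬝ᵥ B *ᵥ s) :=
    one_div_nonneg.2 (by simpa using hB.dotProduct_mulVec_nonneg s)
  have hdrop : B - (1 / (s ⬝ᵥ B *ᵥ s)) • vecMulVec (B *ᵥ s) (B *ᵥ s) ≤ B :=
    sub_le_self _ (nonneg_iff_posSemidef.2 ((posSemidef_vecMulVec_self _).smul hc))
  have hgain : (1 / (y ⬝ᵥ s)) • vecMulVec y y ≤ ((y ⬝ᵥ y) / (y ⬝ᵥ s)) • (1 : Matrix ι ι ℝ) := by
    rw [le_iff, ← one_div_mul_eq_div, ← smul_smul, ← smul_sub]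
    exact (le_iff.1 (vecMulVec_self_le_smul_one y)).smul (one_div_nonneg.2 hys)
  rw [bfgsUpdate_eq_of_isHermitian hB.isHermitian]
  exact add_le_add hdrop hgain

theorem IsHermitian.eigenvalues_le_of_le_smul_one {𝕜 : Type*} [RCLike 𝕜] [DecidableEq ι]
    {A : Matrix ι ι 𝕜} (hA : A.IsHermitian) {c : ℝ} (h : A ≤ c • 1) (i : ι) :
    hA.eigenvalues i ≤ c := by
  rw [← Algebra.algebraMap_eq_smul_one] at h
  exact (le_algebraMap_iff_spectrum_le hA.isSelfAdjoint).1 h _ (hA.eigenvalues_mem_spectrum_real i)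

end Matrix

theorem lbfgs_lambdaMax_bound_general {n k : ℕ} (γ : ℝ) (hγ : 0 < γ)
    (s y : ℕ → (Fin n → ℝ)) (B : ℕ → Matrix (Fin n) (Fin n) ℝ)
    (hB0 : B 0 = γ⁻¹ • (1 : Matrix (Fin n) (Fin n) ℝ))
    (hrec : ∀ j < k, B (j + 1) =
      B j - (1 / (s j ⬝ᵥ B j *ᵥ s j)) • (B j * vecMulVec (s j) (s j) * B j)
          + (1 / (y j ⬝ᵥ s j)) • vecMulVec (y j) (y j))
    (hys : ∀ j < k, 0 < y j ⬝ᵥ s j) :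
    ∀ (hBk : (B k).IsHermitian) (lamMax : ℝ),
      IsGreatest (Set.range hBk.eigenvalues) lamMax →
      lamMax ≤ γ⁻¹ + ∑ j ∈ Finset.range k, (y j ⬝ᵥ y j) / (y j ⬝ᵥ s j) := by
  rintro hBk lamMax ⟨⟨i, rfl⟩, -⟩
  have hbound : ∀ j ≤ k, (B j).PosSemidef ∧
      B j ≤ (γ⁻¹ + ∑ l ∈ Finset.range j, (y l ⬝ᵥ y l) / (y l ⬝ᵥ s l)) • 1 := by
    intro j hj
    induction j with
    | zero =>
      rw [hB0]
      exact ⟨PosSemidef.one.smul (inv_nonneg.2 hγ.le), by simp⟩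
    | succ j ih =>
      obtain ⟨hpsd, hle⟩ := ih (by omega)
      have hys' := (hys j (by omega)).le
      have hupd : B (j + 1) = bfgsUpdate (B j) (s j) (y j) := hrec j (by omega)
      refine ⟨hupd ▸ posSemidef_bfgsUpdate hpsd hys', ?_⟩
      calc B (j + 1) ≤ B j + ((y j ⬝ᵥ y j) / (y j ⬝ᵥ s j)) • 1 := hupd ▸ bfgsUpdate_le hpsd hys'
        _ ≤ _ := by
          rw [Finset.sum_range_succ, ← add_assoc, add_smul]
          exact add_le_add_left hle _
  exact hBk.eigenvalues_le_of_le_smul_one (hbound k le_rfl).2 i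

theorem lbfgs_lambdaMax_bound {n k : ℕ} (γ : ℝ) (hγ : 0 < γ)
    (s y : ℕ → (Fin n → ℝ)) (B : ℕ → Matrix (Fin n) (Fin n) ℝ)
    (hB0 : B 0 = γ⁻¹ • (1 : Matrix (Fin n) (Fin n) ℝ))
    (hrec : ∀ j < k, B (j + 1) =
      B j - (1 / (s j ⬝ᵥ B j *ᵥ s j)) • (B j * vecMulVec (s j) (s j) * B j)
          + (1 / (y j ⬝ᵥ s j)) • vecMulVec (y j) (y j))
    (hys : ∀ j < k, 0 < y j ⬝ᵥ s j) (hs : ∀ j < k, s j ≠ 0) :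
    ∀ (hBk : (B k).IsHermitian) (lamMax : ℝ),
      IsGreatest (Set.range hBk.eigenvalues) lamMax →
      lamMax ≤ γ⁻¹ + ∑ j ∈ Finset.range k, (y j ⬝ᵥ y j) / (y j ⬝ᵥ s j) :=
  lbfgs_lambdaMax_bound_general γ hγ s y B hB0 hrec hys
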